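/- Let Q = [-d, r₁/M] × [a₂ - 2r₂, a₂ + 2r₂] ⊂ ℝ² with 0 ≤ d < r₁/M, M > 1, and r₁ ≥ r₂ > 0. Then for any convex body K̃ ⊂ Q and p ∈ (0,1), ∫_{S¹} h_{K̃}^{1-p} dS(K̃,·) ≤ 2^{1-p} (4r₂(r₁/M + d))^{1-p} (2r₁/M + 2d + 8r₂)^p ≤ (C/M^{1-p}) (r₁r₂)^{1-p} (r₁² + r₂²)^{p/2} for a constant C depending only on p. -/

import Mathlib

open MeasureTheory RealInnerProductSpace

/-- The support function of a set `K ⊂ ℝ²`. -/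
noncomputable def suppFn (K : Set (EuclideanSpace ℝ (Fin 2)))
    (u : EuclideanSpace ℝ (Fin 2)) : ℝ :=
  sSup ((fun x => ⟪u, x⟫) '' K)

/-!
By Hölder's inequality with exponents `1/(1-p)` and `1/p`,
`∫ h^(1-p) dμ ≤ (∫ h dμ)^(1-p) μ(S¹)^p = (2 Area K̃)^(1-p) H¹(∂K̃)^p`.
Area is monotone under inclusion, and so is the perimeter of convex bodies: the nearest-point
projection onto `K̃` is 1-Lipschitz and maps `∂Q` onto `∂K̃`, since the ray from a boundary point
of `K̃` along an outer normal leaves `Q` through a point of `∂Q` that projects back to it.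
The area `4r₂(r₁/M + d)` and perimeter `2r₁/M + 2d + 8r₂` of the box give the first inequality;
the second is arithmetic from `d < r₁/M`, `M > 1` and `(r₁+r₂)^p ≤ 2^(p/2) (r₁²+r₂²)^(p/2)`.
-/

section ConvexProjection

variable {F : Type*} [NormedAddCommGroup F] [InnerProductSpace ℝ F]

lemma norm_sub_sq_le_inner_of_inner_nonpos {z z' y y' : F}
    (h : ⟪z - y, y' - y⟫ ≤ 0) (h' : ⟪z' - y', y - y'⟫ ≤ 0) :
    ‖y - y'‖ ^ 2 ≤ ⟪z - z', y - y'⟫ := by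
  have : ⟪z - z', y - y'⟫ - ‖y - y'‖ ^ 2 = -⟪z - y, y' - y⟫ - ⟪z' - y', y - y'⟫ := by
    rw [← real_inner_self_eq_norm_sq]
    simp only [inner_sub_left, inner_sub_right]
    ring
  linarith

lemma Convex.exists_lipschitzWith_one_proj {K : Set F} (hK : Convex ℝ K) (hne : K.Nonempty)
    (hc : IsComplete K) :
    ∃ f : F → F, LipschitzWith 1 f ∧
      ∀ z, ∀ y ∈ K, (∀ w ∈ K, ⟪z - y, w - y⟫ ≤ 0) → f z = y := by
  choose f hfK hfmin using exists_norm_eq_iInf_of_complete_convex hne hc hK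
  have hvi : ∀ z, ∀ w ∈ K, ⟪z - f z, w - f z⟫ ≤ 0 := fun z =>
    (norm_eq_iInf_iff_real_inner_le_zero hK (hfK z)).1 (hfmin z)
  refine ⟨f, LipschitzWith.of_dist_le_mul fun z z' => ?_, fun z y hy hyvi => ?_⟩
  · rw [dist_eq_norm, dist_eq_norm, NNReal.coe_one, one_mul]
    have hsq := norm_sub_sq_le_inner_of_inner_nonpos (hvi z _ (hfK z')) (hvi z' _ (hfK z))
    have hcs := real_inner_le_norm (z - z') (f z - f z')
    nlinarith [norm_nonneg (f z - f z'), norm_nonneg (z - z')]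
  · have hsq := norm_sub_sq_le_inner_of_inner_nonpos (hvi z y hy) (hyvi (f z) (hfK z))
    rw [sub_self, inner_zero_left] at hsq
    have : ‖f z - y‖ = 0 := by nlinarith [norm_nonneg (f z - y)]
    exact sub_eq_zero.1 (norm_eq_zero.1 this)

lemma Convex.exists_inner_sub_nonpos_of_notMem_interior [CompleteSpace F] {K : Set F}
    (hK : Convex ℝ K) (hint : (interior K).Nonempty) {y : F} (hy : y ∉ interior K) :
    ∃ v : F, v ≠ 0 ∧ ∀ w ∈ K, ⟪v, w - y⟫ ≤ 0 := by
  obtain ⟨g, hg⟩ := geometric_hahn_banach_open_point hK.interior isOpen_interior hy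
  set v := (InnerProductSpace.toDual ℝ F).symm g
  have hgv : ∀ x, g x = ⟪v, x⟫ := fun x => InnerProductSpace.toDual_symm_apply.symm
  obtain ⟨a, ha⟩ := hint
  refine ⟨v, fun hv => by simpa [hgv, hv] using hg a ha, fun w hw => ?_⟩
  have hKcl : K ⊆ closure (interior K) := by
    rw [hK.closure_interior_eq_closure_of_nonempty_interior ⟨a, ha⟩]
    exact subset_closure
  have hgw : g w ≤ g y := closure_minimal (fun x hx => (hg x hx).le)
    (isClosed_le g.continuous continuous_const) (hKcl hw)
  rw [inner_sub_right, ← hgv, ← hgv]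
  linarith

lemma Bornology.IsBounded.exists_add_smul_mem_frontier {Q : Set F} (hQ : Bornology.IsBounded Q)
    {y v : F} (hy : y ∈ Q) (hv : v ≠ 0) : ∃ s : ℝ, 0 ≤ s ∧ y + s • v ∈ frontier Q := by
  obtain ⟨R, hR⟩ := isBounded_iff_forall_norm_le.1 hQ
  have := Subtype.preconnectedSpace (isPreconnected_Ici (a := (0 : ℝ)))
  let ray : Set.Ici (0 : ℝ) → F := fun t => y + (t : ℝ) • v
  have hray : Continuous ray := by fun_prop
  have hv' : 0 < ‖v‖ := norm_pos_iff.2 hv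
  have hfar₀ : (|R| + ‖y‖ + 1) / ‖v‖ ∈ Set.Ici 0 := Set.mem_Ici.2 (by positivity)
  have hout : ray ⟨_, hfar₀⟩ ∉ Q := fun hmem => by
    have hfar := norm_sub_le (ray ⟨_, hfar₀⟩) y
    simp only [ray, add_sub_cancel_left, norm_smul, Real.norm_eq_abs] at hfar
    rw [abs_of_pos (by positivity), div_mul_cancel₀ _ hv'.ne'] at hfar
    linarith [hR _ hmem, le_abs_self R]
  obtain ⟨t, ht⟩ := nonempty_frontier_iff (s := ray ⁻¹' Q) |>.2
    ⟨⟨⟨0, Set.mem_Ici.2 le_rfl⟩, by simpa [ray] using hy⟩,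
      fun h => hout (Set.eq_univ_iff_forall.1 h _)⟩
  exact ⟨t, t.2, hray.frontier_preimage_subset Q ht⟩

theorem Convex.hausdorffMeasure_frontier_le [CompleteSpace F] [MeasurableSpace F] [BorelSpace F]
    {K Q : Set F} (hK : Convex ℝ K) (hKcl : IsClosed K) (hint : (interior K).Nonempty)
    (hQ : Bornology.IsBounded Q) (hKQ : K ⊆ Q) {d : ℝ} (hd : 0 ≤ d) :
    μH[d] (frontier K) ≤ μH[d] (frontier Q) := by
  obtain ⟨f, hf, hfy⟩ :=
    hK.exists_lipschitzWith_one_proj (hint.mono interior_subset) hKcl.isComplete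
  have hsub : frontier K ⊆ f '' frontier Q := by
    intro y hy
    have hyK : y ∈ K := hKcl.frontier_subset hy
    obtain ⟨v, hv, hvK⟩ := hK.exists_inner_sub_nonpos_of_notMem_interior hint hy.2
    obtain ⟨s, hs, hsQ⟩ := hQ.exists_add_smul_mem_frontier (hKQ hyK) hv
    refine ⟨_, hsQ, hfy _ y hyK fun w hw => ?_⟩
    rw [add_sub_cancel_left, real_inner_smul_left]
    exact mul_nonpos_of_nonneg_of_nonpos hs (hvK w hw)
  calc μH[d] (frontier K) ≤ μH[d] (f '' frontier Q) := measure_mono hsub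
    _ ≤ μH[d] (frontier Q) := by simpa using hf.hausdorffMeasure_image_le hd (frontier Q)

end ConvexProjection

theorem integral_rpow_le_rpow_integral_mul_measureReal_univ {α : Type*} [MeasurableSpace α]
    {μ : Measure α} [IsFiniteMeasure μ] {f : α → ℝ} (hf0 : 0 ≤ f) (hf : Integrable f μ)
    {q : ℝ} (hq0 : 0 < q) (hq1 : q < 1) :
    ∫ x, f x ^ q ∂μ ≤ (∫ x, f x ∂μ) ^ q * μ.real Set.univ ^ (1 - q) := by
  have hmem : MemLp (fun x => f x ^ q) (ENNReal.ofReal q⁻¹) μ := by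
    have := (memLp_one_iff_integrable.2 hf).norm_rpow_div (ENNReal.ofReal q)
    rw [ENNReal.toReal_ofReal hq0.le, one_div, ← ENNReal.ofReal_inv_of_pos hq0] at this
    simpa only [Real.norm_of_nonneg (hf0 _)] using this
  have holder := integral_mul_le_Lp_mul_Lq_of_nonneg (.inv_one_sub_inv hq0 hq1)
    (.of_forall fun x => Real.rpow_nonneg (hf0 x) q) (.of_forall fun _ => zero_le_one)
    hmem (memLp_const 1)
  simpa [← Real.rpow_mul (hf0 _), hq0.ne'] using holder

local notation "ℝ²" => EuclideanSpace ℝ (Fin 2)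

def box (a b c e : ℝ) : Set ℝ² := {x | a ≤ x 0 ∧ x 0 ≤ b ∧ c ≤ x 1 ∧ x 1 ≤ e}

lemma box_eq_preimage_Icc (a b c e : ℝ) :
    box a b c e = WithLp.ofLp ⁻¹' Set.Icc ![a, c] ![b, e] := by
  ext x
  simp [box, Pi.le_def, Fin.forall_fin_two]
  tauto

lemma isCompact_box (a b c e : ℝ) : IsCompact (box a b c e) := by
  rw [box_eq_preimage_Icc]
  exact (PiLp.homeomorph 2 _).isCompact_preimage.2 isCompact_Icc

lemma volume_box (a b c e : ℝ) :
    volume (box a b c e) = ENNReal.ofReal (b - a) * ENNReal.ofReal (e - c) := by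
  rw [box_eq_preimage_Icc, ← MeasurableEquiv.coe_toLp_symm,
    (EuclideanSpace.volume_preserving_symm_measurableEquiv_toLp (Fin 2)).measure_preimage
      measurableSet_Icc.nullMeasurableSet, Real.volume_Icc_pi, Fin.prod_univ_two]
  rfl

lemma mem_segment_of_coord_zero_eq {x : ℝ²} {a c e : ℝ} (h0 : x 0 = a) (h1 : x 1 ∈ Set.Icc c e) :
    x ∈ segment ℝ !₂[a, c] !₂[a, e] := by
  obtain ⟨α, β, hα, hβ, hαβ, hx⟩ := (segment_eq_uIcc c e).symm ▸ Set.Icc_subset_uIcc h1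
  refine ⟨α, β, hα, hβ, hαβ, ?_⟩
  ext i
  fin_cases i
  · simp [← h0]
    linear_combination (x 0) * hαβ
  · simpa using hx

lemma mem_segment_of_coord_one_eq {x : ℝ²} {a b c : ℝ} (h1 : x 1 = c) (h0 : x 0 ∈ Set.Icc a b) :
    x ∈ segment ℝ !₂[a, c] !₂[b, c] := by
  obtain ⟨α, β, hα, hβ, hαβ, hx⟩ := (segment_eq_uIcc a b).symm ▸ Set.Icc_subset_uIcc h0
  refine ⟨α, β, hα, hβ, hαβ, ?_⟩
  ext i
  fin_cases i
  · simpa using hx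
  · simp [← h1]
    linear_combination (x 1) * hαβ

lemma frontier_box_subset (a b c e : ℝ) :
    frontier (box a b c e) ⊆
      (segment ℝ !₂[a, c] !₂[a, e] ∪ segment ℝ !₂[b, c] !₂[b, e]) ∪
        (segment ℝ !₂[a, c] !₂[b, c] ∪ segment ℝ !₂[a, e] !₂[b, e]) := by
  intro x hx
  obtain ⟨ha, hb, hc, he⟩ := (isCompact_box a b c e).isClosed.frontier_subset hx
  have h0 : Continuous fun y : ℝ² => y 0 := PiLp.continuous_apply 2 _ 0
  have h1 : Continuous fun y : ℝ² => y 1 := PiLp.continuous_apply 2 _ 1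
  have hopen : IsOpen {y : ℝ² | a < y 0 ∧ y 0 < b ∧ c < y 1 ∧ y 1 < e} :=
    (isOpen_lt continuous_const h0).inter <| (isOpen_lt h0 continuous_const).inter <|
      (isOpen_lt continuous_const h1).inter (isOpen_lt h1 continuous_const)
  have hsub : {y : ℝ² | a < y 0 ∧ y 0 < b ∧ c < y 1 ∧ y 1 < e} ⊆ box a b c e :=
    fun y hy => ⟨hy.1.le, hy.2.1.le, hy.2.2.1.le, hy.2.2.2.le⟩
  have hnot : ¬(a < x 0 ∧ x 0 < b ∧ c < x 1 ∧ x 1 < e) := fun hlt =>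
    hx.2 <| interior_maximal hsub hopen hlt
  rcases ha.lt_or_eq with ha | ha
  · rcases hb.lt_or_eq with hb | hb
    · rcases hc.lt_or_eq with hc | hc
      · rcases he.lt_or_eq with he | he
        · exact absurd ⟨ha, hb, hc, he⟩ hnot
        · exact .inr <| .inr <| mem_segment_of_coord_one_eq he ⟨ha.le, hb.le⟩
      · exact .inr <| .inl <| mem_segment_of_coord_one_eq hc.symm ⟨ha.le, hb.le⟩
    · exact .inl <| .inr <| mem_segment_of_coord_zero_eq hb ⟨hc, he⟩
  · exact .inl <| .inl <| mem_segment_of_coord_zero_eq ha.symm ⟨hc, he⟩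

lemma hausdorffMeasure_frontier_box_le {a b c e : ℝ} (hab : a ≤ b) (hce : c ≤ e) :
    μH[1] (frontier (box a b c e)) ≤ ENNReal.ofReal (2 * (b - a) + 2 * (e - c)) := by
  have hvert (s : ℝ) : edist !₂[s, c] !₂[s, e] = ENNReal.ofReal (e - c) := by
    rw [edist_dist, EuclideanSpace.dist_eq]
    simp [Real.dist_eq, Real.sqrt_sq_eq_abs, abs_sub_comm c, hce]
  have hhor (t : ℝ) : edist !₂[a, t] !₂[b, t] = ENNReal.ofReal (b - a) := by
    rw [edist_dist, EuclideanSpace.dist_eq]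
    simp [Real.dist_eq, Real.sqrt_sq_eq_abs, abs_sub_comm a, hab]
  calc μH[1] (frontier (box a b c e))
      ≤ (μH[1] (segment ℝ !₂[a, c] !₂[a, e]) + μH[1] (segment ℝ !₂[b, c] !₂[b, e])) +
          (μH[1] (segment ℝ !₂[a, c] !₂[b, c]) + μH[1] (segment ℝ !₂[a, e] !₂[b, e])) :=
        (measure_mono (frontier_box_subset a b c e)).trans <| (measure_union_le _ _).trans <|
          add_le_add (measure_union_le _ _) (measure_union_le _ _)
    _ = ENNReal.ofReal (2 * (b - a) + 2 * (e - c)) := by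
        simp only [hausdorffMeasure_segment, hvert, hhor]
        have hba : 0 ≤ b - a := sub_nonneg.2 hab
        have hec : 0 ≤ e - c := sub_nonneg.2 hce
        rw [show 2 * (b - a) + 2 * (e - c) = ((e - c) + (e - c)) + ((b - a) + (b - a)) by ring,
          ENNReal.ofReal_add (add_nonneg hec hec) (add_nonneg hba hba),
          ENNReal.ofReal_add hec hec, ENNReal.ofReal_add hba hba]

lemma volume_toReal_le_of_subset_box {K : Set ℝ²} {a b c e : ℝ} (hKQ : K ⊆ box a b c e)
    (hab : a ≤ b) (hce : c ≤ e) : (volume K).toReal ≤ (b - a) * (e - c) := by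
  have hvol := ENNReal.toReal_mono (by rw [volume_box]; finiteness) (measure_mono hKQ)
  rwa [volume_box, ENNReal.toReal_mul, ENNReal.toReal_ofReal (sub_nonneg.2 hab),
    ENNReal.toReal_ofReal (sub_nonneg.2 hce)] at hvol

lemma Convex.hausdorffMeasure_frontier_toReal_le_of_subset_box {K : Set ℝ²} (hK : Convex ℝ K)
    (hKcl : IsClosed K) (hint : (interior K).Nonempty) {a b c e : ℝ} (hKQ : K ⊆ box a b c e)
    (hab : a ≤ b) (hce : c ≤ e) :
    (μH[1] (frontier K)).toReal ≤ 2 * (b - a) + 2 * (e - c) :=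
  ENNReal.toReal_le_of_le_ofReal (by linarith)
    ((hK.hausdorffMeasure_frontier_le hKcl hint (isCompact_box a b c e).isBounded hKQ
      zero_le_one).trans (hausdorffMeasure_frontier_box_le hab hce))

section SupportFunction

variable {K : Set ℝ²}

lemma inner_le_suppFn (hK : Bornology.IsBounded K) {x : ℝ²} (hx : x ∈ K) (u : ℝ²) :
    ⟪u, x⟫ ≤ suppFn K u :=
  le_csSup ((innerSL ℝ u).lipschitz.isBounded_image hK).bddAbove (Set.mem_image_of_mem _ hx)

lemma suppFn_nonneg (hK : Bornology.IsBounded K) (h0 : 0 ∈ K) (u : ℝ²) : 0 ≤ suppFn K u := by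
  simpa using inner_le_suppFn hK h0 u

lemma suppFn_le_add_mul_norm {R : ℝ} (hR : ∀ x ∈ K, ‖x‖ ≤ R) (hne : K.Nonempty) (u v : ℝ²) :
    suppFn K u ≤ suppFn K v + R * ‖u - v‖ := by
  refine csSup_le (hne.image _) ?_
  rintro _ ⟨x, hx, rfl⟩
  have hK : Bornology.IsBounded K := isBounded_iff_forall_norm_le.2 ⟨R, hR⟩
  calc ⟪u, x⟫ = ⟪v, x⟫ + ⟪u - v, x⟫ := by rw [inner_sub_left]; ring
    _ ≤ suppFn K v + ‖u - v‖ * R := add_le_add (inner_le_suppFn hK hx v)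
        ((real_inner_le_norm _ _).trans (mul_le_mul_of_nonneg_left (hR x hx) (norm_nonneg _)))
    _ = suppFn K v + R * ‖u - v‖ := by ring

lemma continuous_suppFn (hK : Bornology.IsBounded K) (hne : K.Nonempty) :
    Continuous (suppFn K) := by
  obtain ⟨R, hR⟩ := isBounded_iff_forall_norm_le.1 hK
  refine (LipschitzWith.of_le_add_mul' R fun u v => ?_).continuous
  simpa [dist_eq_norm] using suppFn_le_add_mul_norm hR hne u v

lemma integrable_suppFn (hK : Bornology.IsBounded K) (hne : K.Nonempty)
    (μ : Measure (Metric.sphere (0 : ℝ²) 1)) [IsFiniteMeasure μ] :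
    Integrable (fun u : Metric.sphere (0 : ℝ²) 1 => suppFn K u) μ :=
  ((continuous_suppFn hK hne).comp continuous_subtype_val).integrable_of_hasCompactSupport
    (.of_compactSpace _)

end SupportFunction

lemma add_rpow_le_two_rpow_mul_sq_add_sq_rpow {a b p : ℝ} (ha : 0 ≤ a) (hb : 0 ≤ b) (hp : 0 ≤ p) :
    (a + b) ^ p ≤ 2 ^ (p / 2) * (a ^ 2 + b ^ 2) ^ (p / 2) := by
  have hsq : (a + b) ^ p = ((a + b) ^ (2 : ℝ)) ^ (p / 2) := by
    rw [← Real.rpow_mul (by positivity)]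
    ring_nf
  rw [hsq, ← Real.mul_rpow zero_le_two (by positivity), Real.rpow_two]
  exact Real.rpow_le_rpow (by positivity) (by nlinarith [sq_nonneg (a - b)]) (by positivity)

lemma two_rpow_mul_area_rpow_mul_perimeter_rpow_le {p d r₁ r₂ M : ℝ} (hp0 : 0 ≤ p) (hp1 : p ≤ 1)
    (hd : 0 ≤ d) (hdM : d < r₁ / M) (hM : 1 ≤ M) (hr₂ : 0 ≤ r₂) :
    2 ^ (1 - p) * (4 * r₂ * (r₁ / M + d)) ^ (1 - p) * (2 * r₁ / M + 2 * d + 8 * r₂) ^ p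
      ≤ 2 ^ (1 - p) * 8 * 2 ^ (p / 2) / M ^ (1 - p) * (r₁ * r₂) ^ (1 - p)
        * (r₁ ^ 2 + r₂ ^ 2) ^ (p / 2) := by
  have hM0 : 0 < M := zero_lt_one.trans_le hM
  have hr₁ : 0 < r₁ := (div_pos_iff_of_pos_right hM0).1 (hd.trans_lt hdM)
  have hq : 0 ≤ 1 - p := by linarith
  have hr₁M : r₁ / M ≤ r₁ := div_le_self hr₁.le hM
  have harea : 4 * r₂ * (r₁ / M + d) ≤ 8 * (r₁ * r₂) / M := by
    rw [show 8 * (r₁ * r₂) / M = 8 * r₂ * (r₁ / M) by ring]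
    nlinarith
  have hper : 2 * r₁ / M + 2 * d + 8 * r₂ ≤ 8 * (r₁ + r₂) := by
    rw [mul_div_assoc]
    linarith
  calc _ ≤ 2 ^ (1 - p) * (8 * (r₁ * r₂) / M) ^ (1 - p) * (8 * (r₁ + r₂)) ^ p := by gcongr
    _ = 2 ^ (1 - p) * (8 ^ (1 - p) * 8 ^ p) / M ^ (1 - p) * (r₁ * r₂) ^ (1 - p)
          * (r₁ + r₂) ^ p := by
        rw [Real.div_rpow (by positivity) hM0.le,
          Real.mul_rpow (x := 8) (by norm_num) (by positivity),
          Real.mul_rpow (x := 8) (by norm_num) (by positivity)]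
        ring
    _ ≤ 2 ^ (1 - p) * 8 / M ^ (1 - p) * (r₁ * r₂) ^ (1 - p)
          * (2 ^ (p / 2) * (r₁ ^ 2 + r₂ ^ 2) ^ (p / 2)) := by
        rw [← Real.rpow_add (by norm_num), sub_add_cancel, Real.rpow_one]
        gcongr
        exact add_rpow_le_two_rpow_mul_sq_add_sq_rpow hr₁.le hr₂ hp0
    _ = _ := by ring

/-- `L_p` surface area bound for a convex body contained in the thin box
`Q = [-d, r₁/M] × [a₂-2r₂, a₂+2r₂]`. The surface area measure `μ = S(K̃,·)` is
characterized by `∫ h dμ = 2 Area(K̃)` and `μ(S¹) = H¹(∂K̃)`. -/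
theorem stmt_12 (p : ℝ) (hp : p ∈ Set.Ioo (0:ℝ) 1) :
    ∃ C : ℝ, 0 < C ∧
    ∀ (d r₁ r₂ M a₂ : ℝ), 0 ≤ d → d < r₁ / M → 1 < M → 0 < r₂ → r₂ ≤ r₁ →
    ∀ (Kt : Set (EuclideanSpace ℝ (Fin 2))),
      Convex ℝ Kt → IsCompact Kt → (interior Kt).Nonempty →
      (0 : EuclideanSpace ℝ (Fin 2)) ∈ Kt →
      Kt ⊆ {x | -d ≤ x 0 ∧ x 0 ≤ r₁ / M ∧ a₂ - 2*r₂ ≤ x 1 ∧ x 1 ≤ a₂ + 2*r₂} →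
    ∀ (μ : Measure (Metric.sphere (0 : EuclideanSpace ℝ (Fin 2)) 1)), IsFiniteMeasure μ →
      (∫ u, suppFn Kt u ∂μ = 2 * (volume Kt).toReal) →
      ((μ Set.univ).toReal = (μH[1] (frontier Kt)).toReal) →
      (∫ u, (suppFn Kt u) ^ (1 - p) ∂μ
          ≤ 2 ^ (1 - p) * (4 * r₂ * (r₁/M + d)) ^ (1 - p) * (2*r₁/M + 2*d + 8*r₂) ^ p) ∧
      (2 ^ (1 - p) * (4 * r₂ * (r₁/M + d)) ^ (1 - p) * (2*r₁/M + 2*d + 8*r₂) ^ p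
          ≤ C / M ^ (1 - p) * (r₁ * r₂) ^ (1 - p) * (r₁^2 + r₂^2) ^ (p/2)) := by
  obtain ⟨hp0, hp1⟩ := hp
  refine ⟨2 ^ (1 - p) * 8 * 2 ^ (p / 2), by positivity, ?_⟩
  intro d r₁ r₂ M a₂ hd hdM hM hr₂ _ Kt hconv hcomp hinterior h0K hKQ μ _ harea hperim
  refine ⟨?_, two_rpow_mul_area_rpow_mul_perimeter_rpow_le hp0.le hp1.le hd hdM hM.le hr₂.le⟩
  replace hKQ : Kt ⊆ box (-d) (r₁ / M) (a₂ - 2 * r₂) (a₂ + 2 * r₂) := hKQ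
  have hwidth : -d ≤ r₁ / M := by linarith
  have hheight : a₂ - 2 * r₂ ≤ a₂ + 2 * r₂ := by linarith
  have hintegral_le : ∫ u, suppFn Kt u ∂μ ≤ 2 * (4 * r₂ * (r₁ / M + d)) := by
    rw [harea]
    linarith [volume_toReal_le_of_subset_box hKQ hwidth hheight]
  have hmass_le : μ.real Set.univ ≤ 2 * r₁ / M + 2 * d + 8 * r₂ := by
    rw [measureReal_def, hperim, mul_div_assoc]
    linarith [hconv.hausdorffMeasure_frontier_toReal_le_of_subset_box hcomp.isClosed hinterior
      hKQ hwidth hheight]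
  have hsupp_nonneg : ∀ u : Metric.sphere (0 : ℝ²) 1, 0 ≤ suppFn Kt u :=
    fun u => suppFn_nonneg hcomp.isBounded h0K u
  have hintegral_nonneg : 0 ≤ ∫ u, suppFn Kt u ∂μ :=
    integral_nonneg (f := fun u : Metric.sphere (0 : ℝ²) 1 => suppFn Kt u) hsupp_nonneg
  calc ∫ u, suppFn Kt u ^ (1 - p) ∂μ
      ≤ (∫ u, suppFn Kt u ∂μ) ^ (1 - p) * μ.real Set.univ ^ (1 - (1 - p)) :=
        integral_rpow_le_rpow_integral_mul_measureReal_univ hsupp_nonneg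
          (integrable_suppFn hcomp.isBounded ⟨0, h0K⟩ μ) (by linarith) (by linarith)
    _ ≤ (2 * (4 * r₂ * (r₁ / M + d))) ^ (1 - p) * (2 * r₁ / M + 2 * d + 8 * r₂) ^ p := by
        rw [sub_sub_cancel]
        gcongr
        exact Real.rpow_nonneg (hintegral_nonneg.trans hintegral_le) _
    _ = _ := by rw [Real.mul_rpow zero_le_two (mul_nonneg (by positivity) (by linarith))]
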